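/- With f_c as in the previous construction (f_c(y,x) = π(γ^{i_c + [y]})·x where γ^{i_c} = c·(1,γ,...,γ^{t-1})), W_{f_c}(β,α) = 0 if and only if π^{-1}(α) is not in the set {γ^{[y]+i_c} : y ∈ F_2^s}, and otherwise W_{f_c}(β,α) = ±2^t. -/
import Mathlib


open Finset

/-- mod-2 inner product on `F_2^n`. -/
def dotp {n : ℕ} (a b : Fin n → ZMod 2) : ZMod 2 := ∑ i, a i * b i

/-- `(-1)^v` for `v ∈ F_2`. -/
def sgn (v : ZMod 2) : ℤ := (-1 : ℤ) ^ v.val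

/-- Walsh transform of a function on the product domain F_2^s × F_2^t. -/
def walshP {s t : ℕ} (f : (Fin s → ZMod 2) × (Fin t → ZMod 2) → ZMod 2)
    (β : Fin s → ZMod 2) (α : Fin t → ZMod 2) : ℤ :=
  ∑ p : (Fin s → ZMod 2) × (Fin t → ZMod 2), sgn (f p + dotp β p.1 + dotp α p.2)

/-- Integer inner product of the ±1-sequences of two Boolean functions on F_2^s × F_2^t. -/
def seqInnerP {s t : ℕ} (f g : (Fin s → ZMod 2) × (Fin t → ZMod 2) → ZMod 2) : ℤ :=
  ∑ p : (Fin s → ZMod 2) × (Fin t → ZMod 2), sgn (f p) * sgn (g p)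

/-- the integer `[y]` represented by the binary vector `y ∈ F_2^s`. -/
def intRep {s : ℕ} (y : Fin s → ZMod 2) : ℕ := ∑ j : Fin s, (y j).val * 2 ^ (j : ℕ)

lemma sgn_add : ∀ u v : ZMod 2, sgn (u + v) = sgn u * sgn v := by decide

lemma sgn_sum {ι : Type*} (s : Finset ι) (f : ι → ZMod 2) :
    sgn (∑ i ∈ s, f i) = ∏ i ∈ s, sgn (f i) := by
  induction s using Finset.cons_induction with
  | empty => simp [sgn]
  | cons a s ha ih => rw [Finset.sum_cons, Finset.prod_cons, sgn_add, ih]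

lemma dotp_add_left {n : ℕ} (a b x : Fin n → ZMod 2) :
    dotp (a + b) x = dotp a x + dotp b x := by
  simp [dotp, add_mul, Finset.sum_add_distrib]

lemma sum_sgn_dotp {n : ℕ} (w : Fin n → ZMod 2) :
    ∑ x : Fin n → ZMod 2, sgn (dotp w x) = if w = 0 then 2 ^ n else 0 := by
  have h1 : ∑ x : Fin n → ZMod 2, sgn (dotp w x)
      = ∏ i : Fin n, ∑ b : ZMod 2, sgn (w i * b) := by
    rw [Finset.prod_univ_sum, Fintype.piFinset_univ]
    exact Finset.sum_congr rfl fun x _ => by rw [dotp, sgn_sum]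
  have h2 : ∀ u : ZMod 2, ∑ b : ZMod 2, sgn (u * b) = if u = 0 then 2 else 0 := by
    decide
  rw [h1]
  by_cases hw : w = 0
  · subst hw
    rw [if_pos rfl]
    simp only [Pi.zero_apply]
    rw [Finset.prod_congr rfl (fun i _ => h2 0), if_pos rfl]
    simp
  · obtain ⟨i, hi⟩ : ∃ i, w i ≠ 0 := by
      by_contra h
      push_neg at h
      exact hw (funext h)
    rw [if_neg hw]
    exact Finset.prod_eq_zero (Finset.mem_univ i) (by rw [h2, if_neg hi])

lemma intRep_eq {s : ℕ} (y : Fin s → ZMod 2) :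
    intRep y = ((finFunctionFinEquiv
      (fun j => (⟨(y j).val, ZMod.val_lt _⟩ : Fin 2)) : Fin (2 ^ s)) : ℕ) := by
  rw [finFunctionFinEquiv_apply]; rfl

lemma intRep_lt {s : ℕ} (y : Fin s → ZMod 2) : intRep y < 2 ^ s := by
  rw [intRep_eq]; exact Fin.is_lt _

lemma intRep_inj {s : ℕ} : Function.Injective (intRep (s := s)) := by
  intro y1 y2 h
  rw [intRep_eq, intRep_eq] at h
  have h2 := finFunctionFinEquiv.injective (Fin.val_injective h)
  funext j
  have := congrFun h2 j
  exact ZMod.val_injective 2 (congrArg Fin.val this)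

/-- with f_c(y,x) = π(γ^{i_c+[y]})·x where γ^{i_c} = π⁻¹(c),
W_{f_c}(β,α) = 0 iff π⁻¹(α) ∉ {γ^{[y]+i_c} : y ∈ F_2^s}, and otherwise
W_{f_c}(β,α) = ±2^t. -/
theorem stmt_6 {m s t : ℕ} (hm : m = s + t) (hst : s < t)
    (γ : GaloisField 2 t) (hγ : ∀ z : GaloisField 2 t, z ≠ 0 → ∃ n : ℕ, γ ^ n = z)
    (π : GaloisField 2 t ≃ₗ[ZMod 2] (Fin t → ZMod 2))
    (c : Fin t → ZMod 2) (ic : ℕ) (hic : γ ^ ic = π.symm c)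
    (β : Fin s → ZMod 2) (α : Fin t → ZMod 2) :
    (walshP (fun p : (Fin s → ZMod 2) × (Fin t → ZMod 2) =>
        dotp (π (γ ^ (ic + intRep p.1))) p.2) β α = 0 ↔
      ¬ ∃ y : Fin s → ZMod 2, γ ^ (intRep y + ic) = π.symm α) ∧
    ((∃ y : Fin s → ZMod 2, γ ^ (intRep y + ic) = π.symm α) →
      walshP (fun p : (Fin s → ZMod 2) × (Fin t → ZMod 2) =>
          dotp (π (γ ^ (ic + intRep p.1))) p.2) β α = 2 ^ t ∨
      walshP (fun p : (Fin s → ZMod 2) × (Fin t → ZMod 2) =>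
          dotp (π (γ ^ (ic + intRep p.1))) p.2) β α = -(2 ^ t)) := by
  classical
  have := Fintype.ofFinite (GaloisField 2 t)
  -- key formula for the Walsh transform
  have key : walshP (fun p : (Fin s → ZMod 2) × (Fin t → ZMod 2) =>
        dotp (π (γ ^ (ic + intRep p.1))) p.2) β α
      = ∑ y : Fin s → ZMod 2, sgn (dotp β y) *
          (if π (γ ^ (ic + intRep y)) + α = 0 then (2 : ℤ) ^ t else 0) := by
    unfold walshP
    rw [Fintype.sum_prod_type]
    refine Finset.sum_congr rfl fun y _ => ?_
    have step : ∀ x : Fin t → ZMod 2,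
        sgn (dotp (π (γ ^ (ic + intRep y))) x + dotp β y + dotp α x)
        = sgn (dotp β y) * sgn (dotp (π (γ ^ (ic + intRep y)) + α) x) := by
      intro x
      rw [dotp_add_left, sgn_add, sgn_add, sgn_add]
      ring
    simp only [step]
    rw [← Finset.mul_sum, sum_sgn_dotp]
  -- injectivity of the exponent map on the relevant range
  have hγinj : ∀ a b : ℕ, a < 2 ^ s → b < 2 ^ s →
      γ ^ (ic + a) = γ ^ (ic + b) → a = b := by
    rcases Nat.eq_zero_or_pos s with hs | hs
    · subst hs; intro a b ha hb _; omega
    have ht2 : 2 ≤ t := by omega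
    have hcard : Nat.card (GaloisField 2 t) = 2 ^ t :=
      GaloisField.card 2 t (by omega)
    -- γ ≠ 0
    have hγ0 : γ ≠ 0 := by
      intro h0
      have h3 : 3 ≤ Fintype.card (GaloisField 2 t) := by
        rw [← Nat.card_eq_fintype_card, hcard]
        calc 3 ≤ 2 ^ 2 := by norm_num
        _ ≤ 2 ^ t := Nat.pow_le_pow_right (by norm_num) ht2
      -- find z ≠ 0 and z ≠ 1
      have hsub : ({0, 1} : Finset (GaloisField 2 t)) ⊆ Finset.univ :=
        Finset.subset_univ _
      have hlt : ({0, 1} : Finset (GaloisField 2 t)).card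
          < (Finset.univ : Finset (GaloisField 2 t)).card := by
        calc ({0, 1} : Finset (GaloisField 2 t)).card ≤ 2 :=
              Finset.card_insert_le _ _ |>.trans (by simp)
        _ < 3 := by norm_num
        _ ≤ _ := h3
      have hns : ¬ (Finset.univ : Finset (GaloisField 2 t)) ⊆ {0, 1} := by
        intro hcsub
        exact absurd (Finset.card_le_card hcsub) (by omega)
      obtain ⟨z, _, hz⟩ := Finset.not_subset.mp hns
      simp only [Finset.mem_insert, Finset.mem_singleton, not_or] at hz
      obtain ⟨n, hn⟩ := hγ z hz.1
      rcases Nat.eq_zero_or_pos n with hn0 | hn0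
      · rw [hn0, pow_zero] at hn; exact hz.2 hn.symm
      · rw [h0, zero_pow (by omega)] at hn; exact hz.1 hn.symm
    intro a b ha hb hab
    by_contra hne
    -- wlog: get d > 0 with γ ^ d = 1
    have hkey : ∀ a b : ℕ, a < b → γ ^ (ic + a) = γ ^ (ic + b) → γ ^ (b - a) = 1 := by
      intro a b hlt heq
      have : γ ^ (ic + a) * γ ^ (b - a) = γ ^ (ic + a) * 1 := by
        rw [mul_one, ← pow_add]
        rw [heq]; congr 1; omega
      have hne0 : γ ^ (ic + a) ≠ 0 := pow_ne_zero _ hγ0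
      exact mul_left_cancel₀ hne0 this
    have hd : ∃ d : ℕ, 0 < d ∧ d < 2 ^ s ∧ γ ^ d = 1 := by
      rcases Nat.lt_or_ge a b with h | h
      · exact ⟨b - a, by omega, by omega, hkey a b h hab⟩
      · have h' : b < a := by omega
        exact ⟨a - b, by omega, by omega, hkey b a h' hab.symm⟩
    obtain ⟨d, hd0, hds, hd1⟩ := hd
    -- all nonzero elements are powers γ ^ r with r < d
    have hsub : (Finset.univ \ {0} : Finset (GaloisField 2 t))
        ⊆ (Finset.range d).image (γ ^ ·) := by
      intro z hz
      simp only [Finset.mem_sdiff, Finset.mem_singleton] at hz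
      obtain ⟨n, hn⟩ := hγ z hz.2
      refine Finset.mem_image.mpr ⟨n % d, Finset.mem_range.mpr (Nat.mod_lt _ hd0), ?_⟩
      rw [← pow_eq_pow_mod n hd1, hn]
    have hc1 : (Finset.univ \ {0} : Finset (GaloisField 2 t)).card = 2 ^ t - 1 := by
      rw [Finset.card_sdiff_of_subset (by simp), Finset.card_singleton, Finset.card_univ,
        ← Nat.card_eq_fintype_card, hcard]
    have hc2 := (Finset.card_le_card hsub).trans (Finset.card_image_le.trans
      (le_of_eq (Finset.card_range d)))
    rw [hc1] at hc2
    -- 2 ^ t - 1 ≤ d < 2 ^ s ≤ 2 ^ (t - 1), contradiction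
    have h1 : 2 ^ s ≤ 2 ^ (t - 1) := Nat.pow_le_pow_right (by norm_num) (by omega)
    have h2 : 2 ^ (t - 1) + 2 ^ (t - 1) = 2 ^ t := by
      rw [← two_mul, ← pow_succ']
      congr 1; omega
    have h4 : 1 ≤ 2 ^ (t - 1) := Nat.one_le_two_pow
    omega
  -- the matching condition
  have hcond : ∀ y : Fin s → ZMod 2,
      (π (γ ^ (ic + intRep y)) + α = 0 ↔ γ ^ (intRep y + ic) = π.symm α) := by
    intro y
    have hneg : -α = α := by
      funext i
      exact (by decide : ∀ x : ZMod 2, -x = x) (α i)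
    rw [add_eq_zero_iff_eq_neg, hneg, add_comm (intRep y) ic]
    constructor
    · intro h; rw [← h]; simp
    · intro h; rw [h]; simp
  by_cases hex : ∃ y : Fin s → ZMod 2, γ ^ (intRep y + ic) = π.symm α
  · obtain ⟨y0, hy0⟩ := hex
    have huniq : ∀ y : Fin s → ZMod 2,
        (π (γ ^ (ic + intRep y)) + α = 0 ↔ y = y0) := by
      intro y
      rw [hcond y]
      constructor
      · intro h
        refine intRep_inj (hγinj _ _ (intRep_lt y) (intRep_lt y0) ?_)
        rw [add_comm ic, add_comm ic, h, hy0]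
      · rintro rfl; exact hy0
    have hval : walshP (fun p : (Fin s → ZMod 2) × (Fin t → ZMod 2) =>
          dotp (π (γ ^ (ic + intRep p.1))) p.2) β α
        = sgn (dotp β y0) * 2 ^ t := by
      rw [key]
      rw [Finset.sum_eq_single y0]
      · rw [if_pos ((huniq y0).mpr rfl)]
      · intro y _ hy
        rw [if_neg (fun h => hy ((huniq y).mp h)), mul_zero]
      · intro h; exact absurd (Finset.mem_univ y0) h
    have hsgn : sgn (dotp β y0) = 1 ∨ sgn (dotp β y0) = -1 := by
      rcases (by decide : ∀ x : ZMod 2, x = 0 ∨ x = 1) (dotp β y0) with h | h <;>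
        rw [h] <;> [left; right] <;> rfl
    constructor
    · constructor
      · intro h0
        exfalso
        rcases hsgn with h | h <;> rw [hval, h] at h0
        · rw [one_mul] at h0
          exact absurd h0 (by positivity)
        · rw [neg_one_mul, neg_eq_zero] at h0
          exact absurd h0 (by positivity)
      · intro h; exact absurd ⟨y0, hy0⟩ h
    · intro _
      rcases hsgn with h | h
      · left; rw [hval, h, one_mul]
      · right; rw [hval, h]; ring
  · have hall : ∀ y : Fin s → ZMod 2, ¬(π (γ ^ (ic + intRep y)) + α = 0) := by
      intro y h
      exact hex ⟨y, (hcond y).mp h⟩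
    have h0 : walshP (fun p : (Fin s → ZMod 2) × (Fin t → ZMod 2) =>
        dotp (π (γ ^ (ic + intRep p.1))) p.2) β α = 0 := by
      rw [key]
      refine Finset.sum_eq_zero fun y _ => ?_
      rw [if_neg (hall y), mul_zero]
    exact ⟨⟨fun _ => hex, fun _ => h0⟩, fun h => absurd h hex⟩
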